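/- Let χ ∈ C³(Ω,ℝ), q_i^± = ∓∂_i + ∂_iχ, H^{(0)} = Σ_k q_k^+ q_k^-, and H^{(1)}_{ij} = δ_{ij} H^{(0)} + 2 ∂_i∂_j χ (multiplication operator). Then the intertwining relations H^{(0)} q_i^+ = Σ_{k=1}^2 q_k^+ H^{(1)}_{ki} and q_i^- H^{(0)} = Σ_{k=1}^2 H^{(1)}_{ik} q_k^- hold on C³-functions, for i = 1,2. -/

import Mathlib

noncomputable section

/-- Basis vectors of ℝ². -/
def e2 (i : Fin 2) : ℝ × ℝ := if i = 0 then (1, 0) else (0, 1)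

/-- Partial derivative ∂_i. -/
def pd (i : Fin 2) (f : ℝ × ℝ → ℝ) : ℝ × ℝ → ℝ := fun p => fderiv ℝ f p (e2 i)

/-- q_i^+ = -∂_i + (∂_i χ). -/
def qp (χ : ℝ × ℝ → ℝ) (i : Fin 2) (f : ℝ × ℝ → ℝ) : ℝ × ℝ → ℝ :=
  fun p => - pd i f p + pd i χ p * f p

/-- q_i^- = ∂_i + (∂_i χ). -/
def qm (χ : ℝ × ℝ → ℝ) (i : Fin 2) (f : ℝ × ℝ → ℝ) : ℝ × ℝ → ℝ :=
  fun p => pd i f p + pd i χ p * f p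

/-- Antisymmetric symbol ε with ε₀₁ = 1 = -ε₁₀. -/
def eps (i k : Fin 2) : ℝ := if i = 0 ∧ k = 1 then 1 else if i = 1 ∧ k = 0 then -1 else 0

/-- p_i^+ = Σ_k ε_{ik} q_k^-. -/
def pp (χ : ℝ × ℝ → ℝ) (i : Fin 2) (f : ℝ × ℝ → ℝ) : ℝ × ℝ → ℝ :=
  fun p => ∑ k : Fin 2, eps i k * qm χ k f p

/-- p_i^- = Σ_k ε_{ik} q_k^+. -/
def pm (χ : ℝ × ℝ → ℝ) (i : Fin 2) (f : ℝ × ℝ → ℝ) : ℝ × ℝ → ℝ :=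
  fun p => ∑ k : Fin 2, eps i k * qp χ k f p

/-- H^{(0)} = Σ_k q_k^+ q_k^-. -/
def H0 (χ f : ℝ × ℝ → ℝ) : ℝ × ℝ → ℝ := fun p => ∑ k : Fin 2, qp χ k (qm χ k f) p

/-- H^{(1)}_{ij} = δ_{ij} H^{(0)} + 2 ∂_i∂_j χ. -/
def H1 (χ : ℝ × ℝ → ℝ) (i j : Fin 2) (f : ℝ × ℝ → ℝ) : ℝ × ℝ → ℝ := fun p =>
  (if i = j then H0 χ f p else 0) + 2 * pd i (pd j χ) p * f p

/-! The operators q⁺_k commute with one another, as do the q⁻_k, while by the symmetry of second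
derivatives the commutator [q⁻_k, q⁺_i] is multiplication by 2 ∂_k∂_iχ. Hence
H⁽⁰⁾ q⁺_i = Σ_k q⁺_k q⁻_k q⁺_i = Σ_k q⁺_k (q⁺_i q⁻_k + 2 ∂_k∂_iχ) = q⁺_i H⁽⁰⁾ + 2 Σ_k q⁺_k ∂_k∂_iχ,
which is Σ_k q⁺_k H⁽¹⁾_{ki}; the second relation is the mirror computation
q⁻_i H⁽⁰⁾ = Σ_k (q⁺_k q⁻_i + 2 ∂_i∂_kχ) q⁻_k = H⁽⁰⁾ q⁻_i + 2 Σ_k ∂_i∂_kχ q⁻_k.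
Everything is local: C³ at the point gives C² on a neighbourhood, where the commutators hold. -/

open Filter Topology

section Derivatives

variable {g h : ℝ × ℝ → ℝ} {p : ℝ × ℝ} {m n : WithTop ℕ∞}

theorem pd_congr (hgh : g =ᶠ[𝓝 p] h) (i : Fin 2) : pd i g p = pd i h p := by
  rw [pd, pd, hgh.fderiv_eq]

theorem pd_add (hg : DifferentiableAt ℝ g p) (hh : DifferentiableAt ℝ h p) (i : Fin 2) :
    pd i (fun x => g x + h x) p = pd i g p + pd i h p := by
  simp [pd, fderiv_fun_add hg hh]

theorem pd_neg (i : Fin 2) : pd i (fun x => -g x) p = -pd i g p := by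
  simp [pd]

theorem pd_mul (hg : DifferentiableAt ℝ g p) (hh : DifferentiableAt ℝ h p) (i : Fin 2) :
    pd i (fun x => g x * h x) p = pd i g p * h p + g p * pd i h p := by
  simp [pd, fderiv_fun_mul hg hh]
  ring

theorem pd_sum {ι : Type*} (s : Finset ι) {G : ι → ℝ × ℝ → ℝ}
    (hG : ∀ k ∈ s, DifferentiableAt ℝ (G k) p) (i : Fin 2) :
    pd i (fun x => ∑ k ∈ s, G k x) p = ∑ k ∈ s, pd i (G k) p := by
  simp [pd, fderiv_fun_sum hG]

theorem ContDiffAt.pd (hg : ContDiffAt ℝ n g p) (hmn : m + 1 ≤ n) (i : Fin 2) :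
    ContDiffAt ℝ m (pd i g) p :=
  (hg.fderiv_right hmn).clm_apply contDiffAt_const

theorem pd_pd_comm (hg : ContDiffAt ℝ 2 g p) (i j : Fin 2) :
    pd i (pd j g) p = pd j (pd i g) p := by
  have hdiff : DifferentiableAt ℝ (fderiv ℝ g) p :=
    (hg.fderiv_right (m := 1) le_rfl).differentiableAt one_ne_zero
  have hsecond : ∀ u v : Fin 2, pd u (pd v g) p = fderiv ℝ (fderiv ℝ g) p (e2 u) (e2 v) := by
    intro u v
    change fderiv ℝ (fun x => fderiv ℝ g x (e2 v)) p (e2 u) = _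
    simp [fderiv_clm_apply hdiff (differentiableAt_const _)]
  rw [hsecond, hsecond, hg.isSymmSndFDerivAt (by simp)]

end Derivatives

section LadderOperators

variable {χ f g : ℝ × ℝ → ℝ} {p : ℝ × ℝ} {m n : WithTop ℕ∞}

theorem ContDiffAt.qp (hχ : ContDiffAt ℝ n χ p) (hf : ContDiffAt ℝ n f p) (hmn : m + 1 ≤ n)
    (i : Fin 2) : ContDiffAt ℝ m (qp χ i f) p :=
  (hf.pd hmn i).neg.add ((hχ.pd hmn i).mul (hf.of_le (le_self_add.trans hmn)))

theorem ContDiffAt.qm (hχ : ContDiffAt ℝ n χ p) (hf : ContDiffAt ℝ n f p) (hmn : m + 1 ≤ n)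
    (i : Fin 2) : ContDiffAt ℝ m (qm χ i f) p :=
  (hf.pd hmn i).add ((hχ.pd hmn i).mul (hf.of_le (le_self_add.trans hmn)))

theorem ContDiffAt.H0 (hχ : ContDiffAt ℝ n χ p) (hf : ContDiffAt ℝ n f p) (hmn : m + 2 ≤ n) :
    ContDiffAt ℝ m (H0 χ f) p := by
  rw [← one_add_one_eq_two, ← add_assoc] at hmn
  exact ContDiffAt.sum fun k _ =>
    (hχ.of_le (le_self_add.trans hmn)).qp (n := m + 1) (hχ.qm hf hmn k) le_rfl k

theorem qp_congr (hfg : f =ᶠ[𝓝 p] g) (i : Fin 2) : qp χ i f p = qp χ i g p := by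
  simp only [qp, pd_congr hfg, hfg.eq_of_nhds]

theorem qp_add (hf : DifferentiableAt ℝ f p) (hg : DifferentiableAt ℝ g p) (i : Fin 2) :
    qp χ i (fun x => f x + g x) p = qp χ i f p + qp χ i g p := by
  simp only [qp, pd_add hf hg]
  ring

theorem qp_sum {ι : Type*} (s : Finset ι) {G : ι → ℝ × ℝ → ℝ}
    (hG : ∀ k ∈ s, DifferentiableAt ℝ (G k) p) (i : Fin 2) :
    qp χ i (fun x => ∑ k ∈ s, G k x) p = ∑ k ∈ s, qp χ i (G k) p := by
  simp only [qp, pd_sum s hG, Finset.mul_sum, Finset.sum_add_distrib, Finset.sum_neg_distrib]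

theorem qm_sum {ι : Type*} (s : Finset ι) {G : ι → ℝ × ℝ → ℝ}
    (hG : ∀ k ∈ s, DifferentiableAt ℝ (G k) p) (i : Fin 2) :
    qm χ i (fun x => ∑ k ∈ s, G k x) p = ∑ k ∈ s, qm χ i (G k) p := by
  simp only [qm, pd_sum s hG, Finset.mul_sum, Finset.sum_add_distrib]

theorem pd_qp (hχ : ContDiffAt ℝ 2 χ p) (hg : ContDiffAt ℝ 2 g p) (i k : Fin 2) :
    pd k (qp χ i g) p = -pd k (pd i g) p + (pd k (pd i χ) p * g p + pd i χ p * pd k g p) := by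
  have hχ' := (hχ.pd (m := 1) le_rfl i).differentiableAt one_ne_zero
  have hg' := hg.differentiableAt two_ne_zero
  unfold qp
  rw [pd_add ((hg.pd (m := 1) le_rfl i).differentiableAt one_ne_zero).fun_neg (hχ'.fun_mul hg'),
    pd_neg, pd_mul hχ' hg']

theorem pd_qm (hχ : ContDiffAt ℝ 2 χ p) (hg : ContDiffAt ℝ 2 g p) (i k : Fin 2) :
    pd k (qm χ i g) p = pd k (pd i g) p + (pd k (pd i χ) p * g p + pd i χ p * pd k g p) := by
  have hχ' := (hχ.pd (m := 1) le_rfl i).differentiableAt one_ne_zero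
  have hg' := hg.differentiableAt two_ne_zero
  unfold qm
  rw [pd_add ((hg.pd (m := 1) le_rfl i).differentiableAt one_ne_zero) (hχ'.fun_mul hg'),
    pd_mul hχ' hg']

theorem qm_qp_comm (hχ : ContDiffAt ℝ 2 χ p) (hg : ContDiffAt ℝ 2 g p) (i k : Fin 2) :
    qm χ k (qp χ i g) p = qp χ i (qm χ k g) p + 2 * pd k (pd i χ) p * g p := by
  simp only [qm, qp, pd_qp hχ hg, pd_qm hχ hg, pd_pd_comm hg i k, pd_pd_comm hχ i k]
  ring

theorem qp_qp_comm (hχ : ContDiffAt ℝ 2 χ p) (hg : ContDiffAt ℝ 2 g p) (i k : Fin 2) :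
    qp χ k (qp χ i g) p = qp χ i (qp χ k g) p := by
  simp only [qp, pd_qp hχ hg, pd_pd_comm hg i k, pd_pd_comm hχ i k]
  ring

theorem qm_qm_comm (hχ : ContDiffAt ℝ 2 χ p) (hg : ContDiffAt ℝ 2 g p) (i k : Fin 2) :
    qm χ k (qm χ i g) p = qm χ i (qm χ k g) p := by
  simp only [qm, pd_qm hχ hg, pd_pd_comm hg i k, pd_pd_comm hχ i k]
  ring

end LadderOperators

section Intertwining

variable {χ f : ℝ × ℝ → ℝ} {p : ℝ × ℝ}

theorem H0_qp (hχ : ContDiffAt ℝ 3 χ p) (hf : ContDiffAt ℝ 3 f p) (i : Fin 2) :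
    H0 χ (qp χ i f) p =
      qp χ i (H0 χ f) p + ∑ k, qp χ k (fun x => 2 * pd k (pd i χ) x * f x) p := by
  have hχ2 : ContDiffAt ℝ 2 χ p := hχ.of_le (by norm_num)
  have near : ∀ᶠ x in 𝓝 p, ContDiffAt ℝ 2 χ x ∧ ContDiffAt ℝ 2 f x :=
    (hχ2.eventually (by simp)).and ((hf.of_le (by norm_num)).eventually (by simp))
  have step (k : Fin 2) : qp χ k (qm χ k (qp χ i f)) p =
      qp χ i (qp χ k (qm χ k f)) p + qp χ k (fun x => 2 * pd k (pd i χ) x * f x) p := by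
    have comm : qm χ k (qp χ i f) =ᶠ[𝓝 p]
        fun x => qp χ i (qm χ k f) x + 2 * pd k (pd i χ) x * f x :=
      near.mono fun x hx => qm_qp_comm hx.1 hx.2 i k
    have hqm : ContDiffAt ℝ 2 (qm χ k f) p := hχ.qm hf (by norm_num) k
    have hqpqm : DifferentiableAt ℝ (qp χ i (qm χ k f)) p :=
      (hχ2.qp (m := 1) hqm le_rfl i).differentiableAt one_ne_zero
    have hχki : DifferentiableAt ℝ (pd k (pd i χ)) p :=
      ((hχ.pd (m := 2) (by norm_num) i).pd (m := 1) le_rfl k).differentiableAt one_ne_zero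
    have hf' : DifferentiableAt ℝ f p := hf.differentiableAt (by norm_num)
    rw [qp_congr comm, qp_add hqpqm (by fun_prop), qp_qp_comm hχ2 hqm]
  have hqpqm (k : Fin 2) : DifferentiableAt ℝ (qp χ k (qm χ k f)) p :=
    (hχ2.qp (m := 1) (hχ.qm hf (by norm_num) k) le_rfl k).differentiableAt one_ne_zero
  unfold H0
  rw [qp_sum _ fun k _ => hqpqm k, ← Finset.sum_add_distrib]
  exact Finset.sum_congr rfl fun k _ => step k

theorem sum_qp_H1 (hχ : ContDiffAt ℝ 3 χ p) (hf : ContDiffAt ℝ 3 f p) (i : Fin 2) :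
    ∑ k, qp χ k (H1 χ k i f) p =
      qp χ i (H0 χ f) p + ∑ k, qp χ k (fun x => 2 * pd k (pd i χ) x * f x) p := by
  have split (k : Fin 2) : qp χ k (H1 χ k i f) p = (if k = i then qp χ k (H0 χ f) p else 0) +
      qp χ k (fun x => 2 * pd k (pd i χ) x * f x) p := by
    by_cases hk : k = i
    · subst hk
      have hH0 : DifferentiableAt ℝ (H0 χ f) p :=
        (hχ.H0 (m := 1) hf (by norm_num)).differentiableAt one_ne_zero
      have hχkk : DifferentiableAt ℝ (pd k (pd k χ)) p :=
        ((hχ.pd (m := 2) (by norm_num) k).pd (m := 1) le_rfl k).differentiableAt one_ne_zero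
      have hf' : DifferentiableAt ℝ f p := hf.differentiableAt (by norm_num)
      unfold H1
      simp only [↓reduceIte]
      refine qp_add hH0 ?_ k
      fun_prop
    · unfold H1
      simp [hk]
  simp [split, Finset.sum_add_distrib]

theorem qm_H0 (hχ : ContDiffAt ℝ 3 χ p) (hf : ContDiffAt ℝ 3 f p) (i : Fin 2) :
    qm χ i (H0 χ f) p = H0 χ (qm χ i f) p + ∑ k, 2 * pd i (pd k χ) p * qm χ k f p := by
  have hχ2 : ContDiffAt ℝ 2 χ p := hχ.of_le (by norm_num)
  have near : ∀ᶠ x in 𝓝 p, ContDiffAt ℝ 2 χ x ∧ ContDiffAt ℝ 2 f x :=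
    (hχ2.eventually (by simp)).and ((hf.of_le (by norm_num)).eventually (by simp))
  have step (k : Fin 2) : qm χ i (qp χ k (qm χ k f)) p =
      qp χ k (qm χ k (qm χ i f)) p + 2 * pd i (pd k χ) p * qm χ k f p := by
    rw [qm_qp_comm hχ2 (hχ.qm hf (by norm_num) k) k i,
      qp_congr (near.mono fun x hx => qm_qm_comm hx.1 hx.2 k i)]
  have hqpqm (k : Fin 2) : DifferentiableAt ℝ (qp χ k (qm χ k f)) p :=
    (hχ2.qp (m := 1) (hχ.qm hf (by norm_num) k) le_rfl k).differentiableAt one_ne_zero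
  unfold H0
  rw [qm_sum _ fun k _ => hqpqm k, ← Finset.sum_add_distrib]
  exact Finset.sum_congr rfl fun k _ => step k

theorem sum_H1_qm (i : Fin 2) :
    ∑ k, H1 χ i k (qm χ k f) p = H0 χ (qm χ i f) p + ∑ k, 2 * pd i (pd k χ) p * qm χ k f p := by
  simp [H1, Finset.sum_add_distrib]

end Intertwining

/-- The intertwining relations H^{(0)} q_i^+ = Σ_k q_k^+ H^{(1)}_{ki}
and q_i^- H^{(0)} = Σ_k H^{(1)}_{ik} q_k^-. -/
theorem intertwining (Ω : Set (ℝ × ℝ)) (hΩ : IsOpen Ω)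
    (χ : ℝ × ℝ → ℝ) (hχ : ContDiffOn ℝ 3 χ Ω)
    (f : ℝ × ℝ → ℝ) (hf : ContDiffOn ℝ 3 f Ω) (i : Fin 2) :
    ∀ p ∈ Ω,
      H0 χ (qp χ i f) p = (∑ k : Fin 2, qp χ k (H1 χ k i f) p) ∧
      qm χ i (H0 χ f) p = (∑ k : Fin 2, H1 χ i k (qm χ k f) p) := by
  intro p hp
  have hχp := hχ.contDiffAt (hΩ.mem_nhds hp)
  have hfp := hf.contDiffAt (hΩ.mem_nhds hp)
  exact ⟨by rw [H0_qp hχp hfp, sum_qp_H1 hχp hfp], by rw [qm_H0 hχp hfp, sum_H1_qm]⟩
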